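/- Let N ≥ 1, σ₁ > 0, σ₂ > 0, η₂ > 0, and 0 ≤ α < σ₂²/(σ₁² + σ₂²). Let F₁ ∈ ℝ^{N×N} be strictly lower triangular and let F₂ ∈ ℝ^{N×N} be of subdiagonal form whose entry in the last row is zero. Assume that xᵀBx ≥ ασ₁²‖x‖² for all x ∈ ℝ^N (the conjectured lower bound on the smallest eigenvalue of B, noting that min{ασ₁², (1−α)σ₂²} = ασ₁² under the assumption on α). Define g₂* := √η₂·σ₂·e_N. Then for every g₂ ∈ ℝ^N with g₂ᵀQ₂⁻¹g₂ = η₂, the optimality loss satisfies (α‖F₁g₂*‖² + (1−α)‖(I + F₂F₁)g₂*‖²) − (α‖F₁g₂‖² + (1−α)‖(I + F₂F₁)g₂‖²) ≤ η₂(σ₁² + σ₂²)·(σ₂²/(σ₁² + σ₂²) − α). -/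

import Mathlib

open Matrix

noncomputable section

/-- A matrix is strictly lower triangular: `A i j = 0` whenever `i ≤ j`. -/
def Slt {N : ℕ} (A : Matrix (Fin N) (Fin N) ℝ) : Prop :=
  ∀ i j : Fin N, i ≤ j → A i j = 0

/-- A matrix is of subdiagonal form: only entries immediately below the
diagonal may be nonzero. -/
def Subdiag {N : ℕ} (A : Matrix (Fin N) (Fin N) ℝ) : Prop :=
  ∀ i j : Fin N, (i : ℕ) ≠ (j : ℕ) + 1 → A i j = 0

/-- `Q₂ = σ₁²F₂F₂ᵀ + σ₂²I`. -/
def Q2 {N : ℕ} (σ₁ σ₂ : ℝ) (F₂ : Matrix (Fin N) (Fin N) ℝ) :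
    Matrix (Fin N) (Fin N) ℝ :=
  σ₁ ^ 2 • (F₂ * F₂ᵀ) + σ₂ ^ 2 • 1

/-- `B = α·Qs F₁ᵀF₁ Qs + (1−α)·Qs (I + F₂F₁)ᵀ(I + F₂F₁) Qs`. -/
def Bmat {N : ℕ} (α : ℝ) (F₁ F₂ Qs : Matrix (Fin N) (Fin N) ℝ) :
    Matrix (Fin N) (Fin N) ℝ :=
  α • (Qs * F₁ᵀ * F₁ * Qs)
    + (1 - α) • (Qs * (1 + F₂ * F₁)ᵀ * (1 + F₂ * F₁) * Qs)

/-!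
Writing `g₂ = Qs y`, the constraint `g₂ᵀ Q₂⁻¹ g₂ = η₂` becomes `‖y‖² = η₂`, and the objective at
`g₂` becomes `yᵀ B y`, so the assumed bound on `B` gives objective `≥ α σ₁² η₂` for every feasible
`g₂`. At `g₂* = √η₂ σ₂ e_N` we have `F₁ g₂* = 0`, since the last column of a strictly lower
triangular matrix vanishes; hence its objective is exactly `(1 - α) η₂ σ₂²`, and the difference of
the two values is the claimed bound.
-/

lemma Matrix.dotProduct_mulVec_transpose_mul_self {m n R : Type*} [Fintype m] [Fintype n]
    [CommSemiring R] (A : Matrix m n R) (x : n → R) :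
    x ⬝ᵥ (Aᵀ * A) *ᵥ x = A *ᵥ x ⬝ᵥ A *ᵥ x := by
  rw [← mulVec_mulVec, dotProduct_mulVec, vecMul_transpose]

lemma Matrix.dotProduct_inv_mul_self_mulVec {n R : Type*} [Fintype n] [DecidableEq n] [CommRing R]
    {S : Matrix n n R} (hS : Sᵀ = S) (g : n → R) :
    g ⬝ᵥ (S * S)⁻¹ *ᵥ g = S⁻¹ *ᵥ g ⬝ᵥ S⁻¹ *ᵥ g := by
  rw [← dotProduct_mulVec_transpose_mul_self, transpose_nonsing_inv, hS, mul_inv_rev]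

lemma Slt.mulVec_single_eq_zero {N : ℕ} {F : Matrix (Fin N) (Fin N) ℝ} (hF : Slt F)
    {j : Fin N} (hj : ∀ i, i ≤ j) (c : ℝ) : F *ᵥ Pi.single j c = 0 := by
  ext i
  simp [mulVec_single, hF i j (hj i)]

lemma Q2_posDef {N : ℕ} (σ₁ : ℝ) {σ₂ : ℝ} (hσ₂ : σ₂ ≠ 0) (F₂ : Matrix (Fin N) (Fin N) ℝ) :
    (Q2 σ₁ σ₂ F₂).PosDef := by
  have hFF := (posSemidef_self_mul_conjTranspose F₂).smul (sq_nonneg σ₁)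
  rw [conjTranspose_eq_transpose_of_trivial] at hFF
  exact PosDef.posSemidef_add hFF (PosDef.one.smul (sq_pos_of_ne_zero hσ₂))

def weightedSumPower {N : ℕ} (α : ℝ) (F₁ F₂ : Matrix (Fin N) (Fin N) ℝ) (g : Fin N → ℝ) : ℝ :=
  α * (F₁ *ᵥ g ⬝ᵥ F₁ *ᵥ g) + (1 - α) * ((1 + F₂ * F₁) *ᵥ g ⬝ᵥ (1 + F₂ * F₁) *ᵥ g)

lemma weightedSumPower_of_mulVec_eq_zero {N : ℕ} (α : ℝ) {F₁ : Matrix (Fin N) (Fin N) ℝ}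
    (F₂ : Matrix (Fin N) (Fin N) ℝ) {g : Fin N → ℝ} (hg : F₁ *ᵥ g = 0) :
    weightedSumPower α F₁ F₂ g = (1 - α) * (g ⬝ᵥ g) := by
  simp [weightedSumPower, add_mulVec, ← mulVec_mulVec, hg]

lemma dotProduct_Bmat_mulVec {N : ℕ} (α : ℝ) (F₁ F₂ : Matrix (Fin N) (Fin N) ℝ)
    {Qs : Matrix (Fin N) (Fin N) ℝ} (hQs : Qsᵀ = Qs) (x : Fin N → ℝ) :
    x ⬝ᵥ Bmat α F₁ F₂ Qs *ᵥ x = weightedSumPower α F₁ F₂ (Qs *ᵥ x) := by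
  have conj : ∀ A : Matrix (Fin N) (Fin N) ℝ, Qs * Aᵀ * A * Qs = (A * Qs)ᵀ * (A * Qs) := by
    intro A
    rw [transpose_mul, hQs]
    simp only [Matrix.mul_assoc]
  simp only [Bmat, weightedSumPower, add_mulVec, smul_mulVec, dotProduct_add, dotProduct_smul,
    smul_eq_mul, conj, dotProduct_mulVec_transpose_mul_self, mulVec_mulVec]

lemma mul_dotProduct_inv_mul_self_mulVec_le_weightedSumPower {N : ℕ} {α c : ℝ}
    {F₁ F₂ Qs : Matrix (Fin N) (Fin N) ℝ} (hQs : Qsᵀ = Qs) (hQs_det : IsUnit Qs.det)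
    (hB : ∀ x, c * (x ⬝ᵥ x) ≤ x ⬝ᵥ Bmat α F₁ F₂ Qs *ᵥ x) (g : Fin N → ℝ) :
    c * (g ⬝ᵥ (Qs * Qs)⁻¹ *ᵥ g) ≤ weightedSumPower α F₁ F₂ g := by
  have hg : Qs *ᵥ (Qs⁻¹ *ᵥ g) = g := by
    rw [mulVec_mulVec, mul_nonsing_inv _ hQs_det, one_mulVec]
  simpa only [dotProduct_Bmat_mulVec α F₁ F₂ hQs, hg, ← dotProduct_inv_mul_self_mulVec hQs]
    using hB (Qs⁻¹ *ᵥ g)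

/-- (Corollary 1.) Under the conjectured quadratic lower
bound `xᵀBx ≥ ασ₁²‖x‖²` and `0 ≤ α < σ₂²/(σ₁² + σ₂²)`, the optimality loss of
choosing `g₂* = √η₂·σ₂·e_N` is at most `η₂(σ₁² + σ₂²)(σ₂²/(σ₁² + σ₂²) − α)`. -/
theorem g2_star_optimality_loss {N : ℕ} (hN : 1 ≤ N)
    (σ₁ σ₂ : ℝ) (hσ₂ : 0 < σ₂)
    (η₂ : ℝ) (hη₂ : 0 < η₂)
    (α : ℝ)
    (F₁ F₂ : Matrix (Fin N) (Fin N) ℝ) (hF₁ : Slt F₁)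
    (Qs : Matrix (Fin N) (Fin N) ℝ) (hQs : Qs.PosSemidef)
    (hQsq : Qs * Qs = Q2 σ₁ σ₂ F₂)
    (hB : ∀ x : Fin N → ℝ,
      x ⬝ᵥ (Bmat α F₁ F₂ Qs).mulVec x ≥ α * σ₁ ^ 2 * (x ⬝ᵥ x)) :
    let gstar : Fin N → ℝ :=
      (Real.sqrt η₂ * σ₂) • (Pi.single (⟨N - 1, by omega⟩ : Fin N) 1 : Fin N → ℝ)
    ∀ g₂ : Fin N → ℝ, g₂ ⬝ᵥ (Q2 σ₁ σ₂ F₂)⁻¹.mulVec g₂ = η₂ →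
      (α * ((F₁.mulVec gstar) ⬝ᵥ (F₁.mulVec gstar))
        + (1 - α) * (((1 + F₂ * F₁).mulVec gstar) ⬝ᵥ ((1 + F₂ * F₁).mulVec gstar)))
      - (α * ((F₁.mulVec g₂) ⬝ᵥ (F₁.mulVec g₂))
        + (1 - α) * (((1 + F₂ * F₁).mulVec g₂) ⬝ᵥ ((1 + F₂ * F₁).mulVec g₂)))
      ≤ η₂ * (σ₁ ^ 2 + σ₂ ^ 2) * (σ₂ ^ 2 / (σ₁ ^ 2 + σ₂ ^ 2) - α) := by
  intro gstar g₂ hg₂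
  change weightedSumPower α F₁ F₂ gstar - weightedSumPower α F₁ F₂ g₂ ≤ _
  have hQs_det : IsUnit Qs.det := by
    have hQ2_det := (Q2_posDef σ₁ hσ₂.ne' F₂).isUnit.map detMonoidHom
    rw [← hQsq, coe_detMonoidHom, det_mul] at hQ2_det
    exact isUnit_of_mul_isUnit_left hQ2_det
  have hQs_symm : Qsᵀ = Qs := hQs.1
  have lower := mul_dotProduct_inv_mul_self_mulVec_le_weightedSumPower hQs_symm hQs_det hB g₂
  rw [hQsq, hg₂] at lower
  have at_gstar : weightedSumPower α F₁ F₂ gstar = (1 - α) * (η₂ * σ₂ ^ 2) := by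
    have hF₁g : F₁ *ᵥ gstar = 0 := by
      have hlast : ∀ i : Fin N, i ≤ ⟨N - 1, by omega⟩ :=
        fun i => Fin.le_def.2 (Nat.le_sub_one_of_lt i.isLt)
      rw [mulVec_smul, hF₁.mulVec_single_eq_zero hlast, smul_zero]
    rw [weightedSumPower_of_mulVec_eq_zero α F₂ hF₁g]
    simp only [gstar, dotProduct_smul, dotProduct_single, Pi.smul_apply, Pi.single_eq_same,
      smul_eq_mul]
    linear_combination (1 - α) * σ₂ ^ 2 * Real.sq_sqrt hη₂.le
  have hsum : σ₁ ^ 2 + σ₂ ^ 2 ≠ 0 := by positivity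
  have rhs : η₂ * (σ₁ ^ 2 + σ₂ ^ 2) * (σ₂ ^ 2 / (σ₁ ^ 2 + σ₂ ^ 2) - α)
      = (1 - α) * (η₂ * σ₂ ^ 2) - α * σ₁ ^ 2 * η₂ := by
    field_simp
    ring
  rw [at_gstar, rhs]
  linarith

end
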